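/- arXiv:1803.06882 — 3 statements merged into one kernel-verified Lean document; each statement's English description precedes it below -/
import Mathlib

section
/- Let H be a separable real or complex Hilbert space and T a self-adjoint, positive, trace-class operator on H with tr(T) = 1. Then the map μ : L(H) → ℝ defined by μ(P) = tr(PT) takes values in [0,1], satisfies μ(I) = 1, and is σ-additive: for every finite or countable family {P_k}_{k∈K} of pairwise orthogonal projections, ∑_{k∈K} tr(P_k T) = tr((⋁_{k∈K} P_k) T), where ⋁_k P_k is the orthogonal projection onto the closure of the span of the union of the ranges of the P_k (equivalently, the strong limit of the partial sums ∑_{k≤n} P_k). -/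
noncomputable section
open RCLike ContinuousLinearMap

universe u v w

variable {𝕜 : Type*} [RCLike 𝕜] {E : Type u} [NormedAddCommGroup E] [InnerProductSpace 𝕜 E]
  [CompleteSpace E]

open Classical in
/-- The absolute value `|A| = √(A* A)` of a bounded operator: the unique positive
selfadjoint square root of `A* A`. -/
noncomputable def clmAbs (A : E →L[𝕜] E) : E →L[𝕜] E :=
  if h : ∃ S : E →L[𝕜] E, S.IsPositive ∧ S * S = star A * A then h.choose else 0

/-- `A` is trace class if `∑_{u∈N} ⟨u, |A| u⟩ < ∞` for some Hilbert basis `N`. -/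
def IsTraceClass (A : E →L[𝕜] E) : Prop :=
  ∃ (ι : Type u) (N : HilbertBasis ι 𝕜 E),
    Summable fun i => re (inner 𝕜 (N i) (clmAbs A (N i)) : 𝕜)

/-- The trace of `A` computed along the Hilbert basis `N`. -/
noncomputable def traceAlong {ι : Type v} (N : HilbertBasis ι 𝕜 E) (A : E →L[𝕜] E) : 𝕜 :=
  ∑' i, (inner 𝕜 (N i) (A (N i)) : 𝕜)

variable (𝕜 E) in
/-- A choice of Hilbert basis of `E`. -/
noncomputable def stdHilbertBasis : HilbertBasis (exists_hilbertBasis 𝕜 E).choose 𝕜 E :=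
  (exists_hilbertBasis 𝕜 E).choose_spec.choose

/-- The trace `tr A = ∑_{u∈N} ⟨u, A u⟫` (basis independent for trace-class operators). -/
noncomputable def clmTrace (A : E →L[𝕜] E) : 𝕜 :=
  traceAlong (stdHilbertBasis 𝕜 E) A

/-- The trace norm `‖A‖₁ = ∑_{u ∈ N} ⟨u, |A| u⟩` (basis independent). -/
noncomputable def traceNorm (A : E →L[𝕜] E) : ℝ :=
  ∑' i, re (inner 𝕜 (stdHilbertBasis 𝕜 E i) (clmAbs A (stdHilbertBasis 𝕜 E i)) : 𝕜)

/-- An orthogonal projection: `P ∘ P = P` and `P* = P`. -/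
def IsOrthoProj (P : E →L[𝕜] E) : Prop :=
  IsSelfAdjoint P ∧ P * P = P

/-!
Write `T = S * S` with `S` positive. For `‖T‖ ≤ 1` such an `S` is `1 - l`, where `l` is the norm
limit of `b ↦ (1 - T + b²) / 2` started at `0`: the increments of this iteration are dominated by
those of the scalar iteration `β ↦ (1 + β²) / 2`, which increases to `1`; the general case
follows by scaling. Since `tr T = ∑ᵢ ‖S eᵢ‖² = 1`, the operator `S` is Hilbert–Schmidt, and
cyclicity of the trace on products of two Hilbert–Schmidt operators gives
`tr (P T) = tr (S P S) = ∑ᵢ ‖P S eᵢ‖²`. This lies in `[0, 1]` because `‖P x‖ ≤ ‖x‖`, and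
σ-additivity follows from `∑ₖ ‖Pₖ y‖² = ‖Q y‖²` (pair `∑ₖ Pₖ y = Q y` with `y`), summed over
`y = S eᵢ` after exchanging the two sums of nonnegative terms.
-/

variable (𝕜) in
/-- For `‖a‖ ≤ 1` the limit `l` of this sequence solves `2 l = a + l²`, i.e. `(1 - l)² = 1 - a`. -/
def sqrtIter {R : Type*} [Ring R] [Module 𝕜 R] (a : R) : ℕ → R
  | 0 => 0
  | n + 1 => (2 : 𝕜)⁻¹ • (a + sqrtIter a n * sqrtIter a n)

theorem sqrtIter_real_one_mem_Icc (n : ℕ) : sqrtIter ℝ (1 : ℝ) n ∈ Set.Icc 0 1 := by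
  induction n with
  | zero => simp [sqrtIter]
  | succ n ih =>
    simp only [sqrtIter, smul_eq_mul, Set.mem_Icc] at ih ⊢
    constructor <;> nlinarith [ih.1, ih.2]

theorem sqrtIter_real_one_le_succ (n : ℕ) : sqrtIter ℝ (1 : ℝ) n ≤ sqrtIter ℝ (1 : ℝ) (n + 1) := by
  simp only [sqrtIter, smul_eq_mul]
  nlinarith [sq_nonneg (sqrtIter ℝ (1 : ℝ) n - 1)]

section BanachAlgebra

variable {R : Type*} [NormedRing R] [NormedAlgebra 𝕜 R] {a : R}

theorem norm_two_inv_smul (x : R) : ‖(2 : 𝕜)⁻¹ • x‖ = 2⁻¹ * ‖x‖ := by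
  rw [norm_smul, norm_inv, RCLike.norm_two]

theorem norm_sqrtIter_le (ha : ‖a‖ ≤ 1) (n : ℕ) : ‖sqrtIter 𝕜 a n‖ ≤ sqrtIter ℝ (1 : ℝ) n := by
  induction n with
  | zero => simp [sqrtIter]
  | succ n ih =>
    simp only [sqrtIter, norm_two_inv_smul, smul_eq_mul]
    have := (norm_add_le _ _).trans (add_le_add ha ((norm_mul_le _ _).trans
      (mul_le_mul ih ih (norm_nonneg _) ((norm_nonneg _).trans ih))))
    linarith

theorem norm_sqrtIter_succ_sub_le (ha : ‖a‖ ≤ 1) (n : ℕ) :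
    ‖sqrtIter 𝕜 a (n + 1) - sqrtIter 𝕜 a n‖ ≤
      sqrtIter ℝ (1 : ℝ) (n + 1) - sqrtIter ℝ (1 : ℝ) n := by
  induction n with
  | zero => simpa [sqrtIter, norm_two_inv_smul] using ha
  | succ n ih =>
    set b := sqrtIter 𝕜 a
    set β := sqrtIter ℝ (1 : ℝ)
    have hb : b (n + 2) - b (n + 1) =
        (2 : 𝕜)⁻¹ • (b (n + 1) * (b (n + 1) - b n) + (b (n + 1) - b n) * b n) := by
      simp only [b, sqrtIter, ← smul_sub]
      congr 1
      noncomm_ring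
    have hβ : β (n + 2) - β (n + 1) =
        2⁻¹ * (β (n + 1) * (β (n + 1) - β n) + (β (n + 1) - β n) * β n) := by
      simp only [β, sqrtIter, smul_eq_mul]
      ring
    rw [hb, hβ, norm_two_inv_smul]
    gcongr
    refine (norm_add_le _ _).trans
      (add_le_add ((norm_mul_le _ _).trans ?_) ((norm_mul_le _ _).trans ?_))
    · exact mul_le_mul (norm_sqrtIter_le ha _) ih (norm_nonneg _) (sqrtIter_real_one_mem_Icc _).1
    · exact mul_le_mul ih (norm_sqrtIter_le ha _) (norm_nonneg _)
        (sub_nonneg.2 (sqrtIter_real_one_le_succ n))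

theorem cauchySeq_sqrtIter (ha : ‖a‖ ≤ 1) : CauchySeq (sqrtIter 𝕜 a) := by
  set β := sqrtIter ℝ (1 : ℝ)
  refine cauchySeq_of_dist_le_of_summable (fun n => β (n + 1) - β n)
    (fun n => by simpa [dist_eq_norm'] using norm_sqrtIter_succ_sub_le ha n) ?_
  refine summable_of_sum_range_le (c := 1) (fun n => sub_nonneg.2 (sqrtIter_real_one_le_succ n))
    fun n => ?_
  rw [Finset.sum_range_sub]
  linarith [(sqrtIter_real_one_mem_Icc n).2, (sqrtIter_real_one_mem_Icc 0).1]

theorem isSelfAdjoint_sqrtIter [StarRing R] [StarModule 𝕜 R] (ha : IsSelfAdjoint a) (n : ℕ) :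
    IsSelfAdjoint (sqrtIter 𝕜 a n) := by
  induction n with
  | zero => exact .zero _
  | succ n ih =>
    have h2 : IsSelfAdjoint (2 : 𝕜)⁻¹ := by simp [isSelfAdjoint_iff]
    exact h2.smul (ha.add (by simpa only [sq] using ih.pow 2))

theorem exists_isSelfAdjoint_norm_le_one_add_self_eq [CompleteSpace R] [StarRing R]
    [StarModule 𝕜 R] [ContinuousStar R] (hsa : IsSelfAdjoint a) (ha : ‖a‖ ≤ 1) :
    ∃ l : R, IsSelfAdjoint l ∧ ‖l‖ ≤ 1 ∧ l + l = a + l * l := by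
  obtain ⟨l, hl⟩ := cauchySeq_tendsto_of_complete (cauchySeq_sqrtIter (𝕜 := 𝕜) ha)
  refine ⟨l, ?_, ?_, ?_⟩
  · exact (isClosed_eq continuous_star continuous_id).mem_of_tendsto hl
      (.of_forall (isSelfAdjoint_sqrtIter hsa))
  · exact le_of_tendsto' hl.norm fun n =>
      (norm_sqrtIter_le ha n).trans (sqrtIter_real_one_mem_Icc n).2
  · have hlim : l = (2 : 𝕜)⁻¹ • (a + l * l) :=
      tendsto_nhds_unique (hl.comp (Filter.tendsto_add_atTop_nat 1))
        (((hl.mul hl).const_add a).const_smul _)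
    rw [← two_smul 𝕜 l]
    nth_rewrite 1 [hlim]
    rw [smul_smul, mul_inv_cancel₀ two_ne_zero, one_smul]

end BanachAlgebra

namespace ContinuousLinearMap

section Symmetric

variable {F : Type*} [NormedAddCommGroup F] [InnerProductSpace 𝕜 F]

theorem re_inner_apply_self_le_of_norm_le_one {A : F →L[𝕜] F} (h : ‖A‖ ≤ 1) (x : F) :
    re (inner 𝕜 (A x) x) ≤ ‖x‖ ^ 2 :=
  calc re (inner 𝕜 (A x) x) ≤ ‖A x‖ * ‖x‖ := re_inner_le_norm _ _
    _ ≤ ‖x‖ * ‖x‖ := by gcongr; simpa using A.le_of_opNorm_le h x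
    _ = ‖x‖ ^ 2 := (sq _).symm

theorem _root_.LinearMap.IsSymmetric.norm_le_of_abs_re_inner_le {A : F →L[𝕜] F}
    (hA : A.IsSymmetric) {c : ℝ} (hc : 0 ≤ c) (h : ∀ x, |re (inner 𝕜 (A x) x)| ≤ c * ‖x‖ ^ 2) :
    ‖A‖ ≤ c := by
  rw [norm_eq_iSup_rayleighQuotient A hA]
  refine ciSup_le fun x => ?_
  rcases eq_or_ne x 0 with rfl | hx
  · simpa using hc
  · have hx2 : 0 < ‖x‖ ^ 2 := pow_pos (norm_pos_iff.2 hx) 2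
    rw [rayleighQuotient, reApplyInnerSelf_apply, abs_div, abs_of_pos hx2, div_le_iff₀ hx2]
    exact h x

theorem IsPositive.norm_one_sub_le_one {T : F →L[𝕜] F} (hT : T.IsPositive) (h : ‖T‖ ≤ 1) :
    ‖1 - T‖ ≤ 1 := by
  refine (LinearMap.IsSymmetric.one.sub hT.isSymmetric).norm_le_of_abs_re_inner_le
    zero_le_one fun x => ?_
  have h0 := hT.re_inner_nonneg_left x
  have h1 := re_inner_apply_self_le_of_norm_le_one h x
  rw [sub_apply, one_apply_eq_self, inner_sub_left, map_sub, inner_self_eq_norm_sq, abs_le]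
  constructor <;> linarith

end Symmetric

theorem isPositive_one_sub_of_norm_le_one {L : E →L[𝕜] E} (hL : IsSelfAdjoint L)
    (h : ‖L‖ ≤ 1) : (1 - L).IsPositive := by
  refine ⟨((IsSelfAdjoint.one _).sub hL).isSymmetric, fun x => ?_⟩
  have := re_inner_apply_self_le_of_norm_le_one h x
  rw [reApplyInnerSelf_apply, sub_apply, one_apply_eq_self, inner_sub_left, map_sub,
    inner_self_eq_norm_sq]
  linarith

theorem IsPositive.exists_isPositive_mul_self_eq_of_norm_le_one {T : E →L[𝕜] E}
    (hT : T.IsPositive) (h : ‖T‖ ≤ 1) : ∃ S : E →L[𝕜] E, S.IsPositive ∧ S * S = T := by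
  obtain ⟨L, hL, hL1, hLL⟩ := exists_isSelfAdjoint_norm_le_one_add_self_eq (𝕜 := 𝕜)
    ((IsSelfAdjoint.one _).sub hT.isSelfAdjoint) (hT.norm_one_sub_le_one h)
  refine ⟨1 - L, isPositive_one_sub_of_norm_le_one hL hL1, ?_⟩
  calc (1 - L) * (1 - L) = 1 - (L + L) + L * L := by noncomm_ring
    _ = T := by rw [hLL]; noncomm_ring

theorem IsPositive.exists_isPositive_mul_self_eq {T : E →L[𝕜] E} (hT : T.IsPositive) :
    ∃ S : E →L[𝕜] E, S.IsPositive ∧ S * S = T := by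
  set c : ℝ := ‖T‖ + 1
  have hc : 0 < c := by positivity
  obtain ⟨S, hS, hSS⟩ := IsPositive.exists_isPositive_mul_self_eq_of_norm_le_one
    (hT.smul_of_nonneg (RCLike.ofReal_nonneg.2 (inv_nonneg.2 hc.le)) (c := ((c⁻¹ : ℝ) : 𝕜)))
    (by
      rw [norm_smul, norm_ofReal, abs_of_pos (inv_pos.2 hc), inv_mul_le_one₀ hc]
      linarith)
  refine ⟨((√c : ℝ) : 𝕜) • S,
    hS.smul_of_nonneg (RCLike.ofReal_nonneg.2 (Real.sqrt_nonneg c)), ?_⟩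
  rw [smul_mul_smul_comm, hSS, smul_smul, ← ofReal_mul, Real.mul_self_sqrt hc.le, ← ofReal_mul,
    mul_inv_cancel₀ hc.ne', ofReal_one, one_smul]

end ContinuousLinearMap

section HilbertBasis

variable {ι F : Type*} [NormedAddCommGroup F] [InnerProductSpace 𝕜 F]

theorem HilbertBasis.hasSum_norm_inner_sq (e : HilbertBasis ι 𝕜 F) (x : F) :
    HasSum (fun i => ‖(inner 𝕜 (e i) x : 𝕜)‖ ^ 2) (‖x‖ ^ 2) := by
  have h := lp.hasSum_norm (p := 2) (by norm_num) (e.repr x)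
  simpa [e.repr_apply_apply] using h

theorem HilbertBasis.summable_norm_inner_apply_sq (e : HilbertBasis ι 𝕜 F) {A : F →L[𝕜] F}
    (hA : Summable fun i => ‖A (e i)‖ ^ 2) :
    Summable fun p : ι × ι => ‖(inner 𝕜 (e p.2) (A (e p.1)) : 𝕜)‖ ^ 2 :=
  (summable_prod_of_nonneg fun _ => sq_nonneg _).2
    ⟨fun i => (e.hasSum_norm_inner_sq (A (e i))).summable,
      hA.congr fun i => (e.hasSum_norm_inner_sq (A (e i))).tsum_eq.symm⟩

end HilbertBasis

theorem traceAlong_mul_comm {ι : Type*} (e : HilbertBasis ι 𝕜 E) {A B : E →L[𝕜] E}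
    (hA : Summable fun i => ‖A (e i)‖ ^ 2) (hB : Summable fun i => ‖B (e i)‖ ^ 2) :
    traceAlong e (A * B) = traceAlong e (B * A) := by
  set f : ι → ι → 𝕜 := fun i j => inner 𝕜 (e i) (A (e j)) * inner 𝕜 (e j) (B (e i))
  have hrow : ∀ i, HasSum (f i) (inner 𝕜 (e i) ((A * B) (e i))) := fun i => by
    simpa [adjoint_inner_left] using e.hasSum_inner_mul_inner (adjoint A (e i)) (B (e i))
  have hcol : ∀ j, HasSum (fun i => f i j) (inner 𝕜 (e j) ((B * A) (e j))) := fun j => by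
    simpa [adjoint_inner_left, f, mul_comm] using
      e.hasSum_inner_mul_inner (adjoint B (e j)) (A (e j))
  -- `2 ‖a b‖ ≤ ‖a‖² + ‖b‖²`, and both squared matrix coefficients are summable by Parseval
  have hf : Summable (Function.uncurry f) := by
    refine Summable.of_norm_bounded
      (((e.summable_norm_inner_apply_sq hA).prod_symm.add
        (e.summable_norm_inner_apply_sq hB)).div_const 2) fun p => ?_
    simp only [Function.uncurry, f, norm_mul, Prod.fst_swap, Prod.snd_swap]
    nlinarith [two_mul_le_add_sq ‖(inner 𝕜 (e p.1) (A (e p.2)) : 𝕜)‖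
      ‖(inner 𝕜 (e p.2) (B (e p.1)) : 𝕜)‖]
  calc traceAlong e (A * B) = ∑' i, ∑' j, f i j := tsum_congr fun i => (hrow i).tsum_eq.symm
    _ = ∑' j, ∑' i, f i j := hf.tsum_comm.symm
    _ = traceAlong e (B * A) := tsum_congr fun j => (hcol j).tsum_eq

theorem IsSelfAdjoint.inner_apply_apply_eq_norm_sq {S : E →L[𝕜] E} (hS : IsSelfAdjoint S)
    (x : E) : inner 𝕜 x (S (S x)) = ((‖S x‖ ^ 2 : ℝ) : 𝕜) := by
  rw [← hS.isSymmetric.apply_clm, inner_self_eq_norm_sq_to_K, ofReal_pow]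

theorem traceAlong_mul_self {ι : Type*} (e : HilbertBasis ι 𝕜 E) {S : E →L[𝕜] E}
    (hS : IsSelfAdjoint S) : traceAlong e (S * S) = ((∑' i, ‖S (e i)‖ ^ 2 : ℝ) : 𝕜) := by
  rw [ofReal_tsum]
  exact tsum_congr fun i => hS.inner_apply_apply_eq_norm_sq (e i)

theorem traceAlong_mul_mul_self {ι : Type*} (e : HilbertBasis ι 𝕜 E) (C : E →L[𝕜] E)
    {S : E →L[𝕜] E} (hS : IsSelfAdjoint S) (hSe : Summable fun i => ‖S (e i)‖ ^ 2) :
    traceAlong e (C * (S * S)) = ∑' i, inner 𝕜 (S (e i)) (C (S (e i))) := by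
  have hCS : Summable fun i => ‖(C * S) (e i)‖ ^ 2 :=
    (hSe.mul_left (‖C‖ ^ 2)).of_nonneg_of_le (fun _ => by positivity) fun i => by
      rw [← mul_pow]
      exact pow_le_pow_left₀ (norm_nonneg _) (C.le_opNorm _) 2
  rw [← mul_assoc, traceAlong_mul_comm e hCS hSe]
  exact tsum_congr fun i => (hS.isSymmetric.apply_clm _ _).symm

namespace IsOrthoProj

theorem isStarProjection {P : E →L[𝕜] E} (hP : IsOrthoProj P) : IsStarProjection P :=
  ⟨hP.2, hP.1⟩

theorem norm_apply_le {P : E →L[𝕜] E} (hP : IsOrthoProj P) (x : E) : ‖P x‖ ≤ ‖x‖ :=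
  (P.le_of_opNorm_le hP.isStarProjection.norm_le x).trans_eq (one_mul _)

theorem inner_apply_eq_norm_sq {P : E →L[𝕜] E} (hP : IsOrthoProj P) (x : E) :
    inner 𝕜 x (P x) = ((‖P x‖ ^ 2 : ℝ) : 𝕜) := by
  rw [← hP.1.inner_apply_apply_eq_norm_sq, ← mul_apply_eq_comp, hP.2]

theorem hasSum_norm_apply_sq {K : Type*} {P : K → E →L[𝕜] E} {Q : E →L[𝕜] E}
    (hP : ∀ k, IsOrthoProj (P k)) (hQ : IsOrthoProj Q) {x : E}
    (h : HasSum (fun k => P k x) (Q x)) : HasSum (fun k => ‖P k x‖ ^ 2) (‖Q x‖ ^ 2) := by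
  have := h.mapL (innerSL 𝕜 x)
  simp only [innerSL_apply_apply, (hP _).inner_apply_eq_norm_sq,
    hQ.inner_apply_eq_norm_sq] at this
  exact (hasSum_ofReal 𝕜).1 this

end IsOrthoProj

theorem traceAlong_orthoProj_mul_mul_self {ι : Type*} (e : HilbertBasis ι 𝕜 E)
    {P S : E →L[𝕜] E} (hP : IsOrthoProj P) (hS : IsSelfAdjoint S)
    (hSe : Summable fun i => ‖S (e i)‖ ^ 2) :
    traceAlong e (P * (S * S)) = ((∑' i, ‖P (S (e i))‖ ^ 2 : ℝ) : 𝕜) := by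
  rw [traceAlong_mul_mul_self e P hS hSe, ofReal_tsum]
  exact tsum_congr fun i => hP.inner_apply_eq_norm_sq _

theorem hasSum_tsum_swap_of_nonneg {ι K : Type*} {f : ι → K → ℝ} (hf : ∀ i k, 0 ≤ f i k)
    {r : ι → ℝ} (hr : ∀ i, HasSum (f i) (r i)) (hsum : Summable r) :
    HasSum (fun k => ∑' i, f i k) (∑' i, r i) := by
  have h : Summable (Function.uncurry f) :=
    (summable_prod_of_nonneg fun p => hf p.1 p.2).2
      ⟨fun i => (hr i).summable, hsum.congr fun i => (hr i).tsum_eq.symm⟩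
  rw [← tsum_congr fun i => (hr i).tsum_eq, ← h.tsum_comm]
  exact h.prod_symm.prod.hasSum

theorem state_induces_probability_measure_general {𝕜 : Type*} [RCLike 𝕜] {E : Type u}
    [NormedAddCommGroup E] [InnerProductSpace 𝕜 E] [CompleteSpace E]
    {T : E →L[𝕜] E} (hpos : T.IsPositive)
    (htr : clmTrace T = 1) :
    (∀ P : E →L[𝕜] E, IsOrthoProj P →
      0 ≤ re (clmTrace (P * T)) ∧ re (clmTrace (P * T)) ≤ 1 ∧ im (clmTrace (P * T)) = 0) ∧
    clmTrace ((1 : E →L[𝕜] E) * T) = 1 ∧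
    ∀ (K : Type) [Countable K] (P : K → E →L[𝕜] E) (Q : E →L[𝕜] E),
      (∀ k, IsOrthoProj (P k)) → IsOrthoProj Q →
      (Pairwise fun k l => P k * P l = 0) →
      (∀ x : E, HasSum (fun k => P k x) (Q x)) →
      HasSum (fun k => clmTrace (P k * T)) (clmTrace (Q * T)) := by
  obtain ⟨S, hS, rfl⟩ := hpos.exists_isPositive_mul_self_eq
  set e := stdHilbertBasis 𝕜 E
  have hone : ∑' i, ‖S (e i)‖ ^ 2 = 1 := by
    exact_mod_cast (traceAlong_mul_self e hS.isSelfAdjoint).symm.trans htr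
  -- a non-summable series has `∑' = 0`, so `tr T = 1` forces `S` to be Hilbert–Schmidt
  have hHS : Summable fun i => ‖S (e i)‖ ^ 2 := by
    by_contra h
    rw [tsum_eq_zero_of_not_summable h] at hone
    exact zero_ne_one hone
  have htrace (P : E →L[𝕜] E) (hP : IsOrthoProj P) :
      clmTrace (P * (S * S)) = ((∑' i, ‖P (S (e i))‖ ^ 2 : ℝ) : 𝕜) :=
    traceAlong_orthoProj_mul_mul_self e hP hS.isSelfAdjoint hHS
  have hle (P : E →L[𝕜] E) (hP : IsOrthoProj P) (i) : ‖P (S (e i))‖ ^ 2 ≤ ‖S (e i)‖ ^ 2 :=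
    pow_le_pow_left₀ (norm_nonneg _) (hP.norm_apply_le _) 2
  have hsum (P : E →L[𝕜] E) (hP : IsOrthoProj P) : Summable fun i => ‖P (S (e i))‖ ^ 2 :=
    hHS.of_nonneg_of_le (fun _ => sq_nonneg _) (hle P hP)
  refine ⟨fun P hP => ?_, by rwa [one_mul], fun K _ P Q hP hQ _ hPQ => ?_⟩
  · rw [htrace P hP, ofReal_re, ofReal_im]
    exact ⟨tsum_nonneg fun _ => sq_nonneg _,
      hone ▸ (hsum P hP).tsum_le_tsum (hle P hP) hHS, rfl⟩
  · simp only [htrace _ (hP _), htrace Q hQ, hasSum_ofReal]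
    exact hasSum_tsum_swap_of_nonneg (fun _ _ => sq_nonneg _)
      (fun i => IsOrthoProj.hasSum_norm_apply_sq hP hQ (hPQ (S (e i)))) (hsum Q hQ)

/-- Every self-adjoint, positive, trace-class operator of unit trace on a separable real or
complex Hilbert space induces, via `P ↦ tr (P T)`, a map on orthogonal projections with values
in `[0,1]`, equal to `1` on the identity, and σ-additive: for every finite or countable family
of pairwise orthogonal projections `Pₖ` with join `Q` (the orthogonal projection onto the
closure of the span of the union of the ranges, equivalently the strong limit of the partial
sums, i.e. `∀ x, HasSum (fun k => Pₖ x) (Q x)`), `∑ₖ tr (Pₖ T) = tr (Q T)`. -/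
theorem state_induces_probability_measure {𝕜 : Type*} [RCLike 𝕜] {E : Type u}
    [NormedAddCommGroup E] [InnerProductSpace 𝕜 E] [CompleteSpace E]
    [TopologicalSpace.SeparableSpace E]
    {T : E →L[𝕜] E} (hsa : IsSelfAdjoint T) (hpos : T.IsPositive) (htc : IsTraceClass T)
    (htr : clmTrace T = 1) :
    (∀ P : E →L[𝕜] E, IsOrthoProj P →
      0 ≤ re (clmTrace (P * T)) ∧ re (clmTrace (P * T)) ≤ 1 ∧ im (clmTrace (P * T)) = 0) ∧
    clmTrace ((1 : E →L[𝕜] E) * T) = 1 ∧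
    ∀ (K : Type) [Countable K] (P : K → E →L[𝕜] E) (Q : E →L[𝕜] E),
      (∀ k, IsOrthoProj (P k)) → IsOrthoProj Q →
      (Pairwise fun k l => P k * P l = 0) →
      (∀ x : E, HasSum (fun k => P k x) (Q x)) →
      HasSum (fun k => clmTrace (P k * T)) (clmTrace (Q * T)) :=
  state_induces_probability_measure_general hpos htr
end
end

section
/- Let H be a real or complex Hilbert space and A a bounded operator on H. If ∑_{u∈N} ⟨u, |A| u⟩ < +∞ for some Hilbert basis N of H, where |A| = √(A*A), then ∑_{u∈M} ⟨u, |A| u⟩ < +∞ for every Hilbert basis M of H, and the value of the sum ∑_{u∈M} ⟨u, |A| u⟩ does not depend on the Hilbert basis M. -/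
noncomputable section
open RCLike ContinuousLinearMap

universe u v w

variable {𝕜 : Type*} [RCLike 𝕜] {E : Type u} [NormedAddCommGroup E] [InnerProductSpace 𝕜 E]
  [CompleteSpace E]

universe w'

/-!
`|A|` is positive, so it has a self-adjoint square root `S`; over `ℝ` as well as over `ℂ` one can
take `S = √c · √(1 + X)` with `c = ‖|A|‖`, `X = |A|/c - 1`, where `‖X‖ ≤ 1` and the binomial series
of `√(1 + x)` converges absolutely on the closed unit ball. Then `⟨u, |A| u⟩ = ‖S u‖²`, and by
Parseval and Tonelli, for any two Hilbert bases `M` and `M'`,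
`∑ᵢ ‖S Mᵢ‖² = ∑ᵢ ∑ⱼ |⟨M'ⱼ, S Mᵢ⟩|² = ∑ⱼ ∑ᵢ |⟨Mᵢ, S M'ⱼ⟩|² = ∑ⱼ ‖S M'ⱼ‖²` in `[0, ∞]`.
-/

open Finset

theorem Ring.succ_nsmul_choose_succ {R : Type*} [NonAssocRing R] [Pow R ℕ] [NatPowAssoc R]
    [BinomialRing R] (r : R) (n : ℕ) :
    (n + 1) • Ring.choose r (n + 1) = Ring.choose r n * (r - n) := by
  have h := Ring.choose_smul_choose r (Nat.le_succ n)
  rwa [Nat.choose_succ_self_right, show n.succ - n = 1 by omega, Ring.choose_one_right] at h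

theorem Ring.summable_abs_choose {r : ℝ} (hr : 0 < r) : Summable fun n ↦ |Ring.choose r n| := by
  set a : ℕ → ℝ := fun n ↦ |Ring.choose r n|
  set m := ⌈r⌉₊
  -- for `n ≥ r` the recursion `(n + 1) a (n + 1) = (n - r) a n` makes `r a n` telescope
  have telescope : ∀ n, m ≤ n → r * a n = n * a n - (n + 1 : ℕ) * a (n + 1) := by
    intro n hn
    have hrn : r ≤ n := (Nat.le_ceil r).trans (by exact_mod_cast hn)
    have h := congrArg abs (Ring.succ_nsmul_choose_succ r n)
    rw [nsmul_eq_mul, abs_mul, abs_mul, abs_of_nonpos (sub_nonpos.2 hrn)] at h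
    push_cast at h ⊢
    rw [abs_of_nonneg (by positivity)] at h
    simp only [a]
    linarith
  refine (summable_nat_add_iff m).1 <|
    summable_of_sum_range_le (c := m * a m / r) (fun n ↦ abs_nonneg _) fun K ↦ ?_
  have hsum : ∑ k ∈ range K, r * a (k + m) = m * a m - (K + m : ℕ) * a (K + m) := by
    rw [sum_congr rfl fun k _ ↦ telescope (k + m) le_add_self]
    simpa [add_right_comm] using sum_range_sub' (fun k ↦ ((k + m : ℕ) : ℝ) * a (k + m)) K
  rw [le_div_iff₀ hr, sum_mul]
  simp_rw [mul_comm _ r]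
  rw [hsum]
  have : 0 ≤ ((K + m : ℕ) : ℝ) * a (K + m) := by positivity
  linarith

theorem sum_antidiagonal_choose_half_mul (n : ℕ) :
    ∑ ij ∈ antidiagonal n, Ring.choose (1 / 2 : ℝ) ij.1 * Ring.choose (1 / 2 : ℝ) ij.2 =
      Nat.choose 1 n := by
  rw [← Ring.add_choose_eq n (Commute.refl _), add_halves, ← Nat.cast_one, Ring.choose_natCast]

section BinomialSqrt

variable (𝕜 : Type*) {A : Type*} [RCLike 𝕜] [NormedRing A] [NormedAlgebra 𝕜 A]

def sqrtOneAdd (x : A) : A :=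
  ∑' n, ((Ring.choose (1 / 2 : ℝ) n : ℝ) : 𝕜) • x ^ n

variable {𝕜}

theorem summable_norm_choose_half_smul_pow {x : A} (hx : ‖x‖ ≤ 1) :
    Summable fun n ↦ ‖((Ring.choose (1 / 2 : ℝ) n : ℝ) : 𝕜) • x ^ n‖ := by
  refine Summable.of_norm_bounded_eventually_nat (Ring.summable_abs_choose one_half_pos) ?_
  filter_upwards [Filter.eventually_gt_atTop 0] with n hn
  rw [norm_norm, norm_smul, RCLike.norm_ofReal]
  exact mul_le_of_le_one_right (abs_nonneg _) <|
    (norm_pow_le' x hn).trans (pow_le_one₀ (norm_nonneg x) hx)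

theorem sqrtOneAdd_mul_self [CompleteSpace A] {x : A} (hx : ‖x‖ ≤ 1) :
    sqrtOneAdd 𝕜 x * sqrtOneAdd 𝕜 x = 1 + x := by
  have hs := summable_norm_choose_half_smul_pow (𝕜 := 𝕜) hx
  rw [sqrtOneAdd, tsum_mul_tsum_eq_tsum_sum_antidiagonal_of_summable_norm hs hs]
  have hterm (n : ℕ) : ∑ ij ∈ antidiagonal n,
      (((Ring.choose (1 / 2 : ℝ) ij.1 : ℝ) : 𝕜) • x ^ ij.1) *
        (((Ring.choose (1 / 2 : ℝ) ij.2 : ℝ) : 𝕜) • x ^ ij.2) =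
      ((Nat.choose 1 n : ℝ) : 𝕜) • x ^ n := by
    rw [← sum_antidiagonal_choose_half_mul, RCLike.ofReal_sum, sum_smul]
    refine sum_congr rfl fun ij hij ↦ ?_
    rw [smul_mul_smul_comm, ← pow_add, mem_antidiagonal.1 hij, RCLike.ofReal_mul]
  rw [tsum_congr hterm, tsum_eq_sum (s := range 2)]
  · simp [sum_range_succ]
  · intro n hn
    rw [Nat.choose_eq_zero_of_lt (by simpa using hn)]
    simp

theorem IsSelfAdjoint.sqrtOneAdd [StarRing A] [StarModule 𝕜 A] [ContinuousStar A] {x : A}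
    (hx : IsSelfAdjoint x) : IsSelfAdjoint (sqrtOneAdd 𝕜 x) := by
  rw [IsSelfAdjoint, _root_.sqrtOneAdd, tsum_star]
  refine tsum_congr fun n ↦ ?_
  rw [star_smul, RCLike.star_def, RCLike.conj_ofReal, (hx.pow n).star_eq]

end BinomialSqrt

namespace ContinuousLinearMap

variable {𝕜 E : Type*} [RCLike 𝕜] [NormedAddCommGroup E] [InnerProductSpace 𝕜 E]

open RCLike
open scoped InnerProductSpace

theorem IsPositive.norm_sub_one_le {T : E →L[𝕜] E} (hT : T.IsPositive) (h : ‖T‖ ≤ 1) :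
    ‖T - 1‖ ≤ 1 := by
  rw [(T - 1).norm_eq_iSup_rayleighQuotient (hT.isSymmetric.sub .one)]
  refine ciSup_le fun x ↦ ?_
  have hnonneg := hT.re_inner_nonneg_left x
  have hle : re ⟪T x, x⟫_𝕜 ≤ ‖x‖ ^ 2 :=
    calc re ⟪T x, x⟫_𝕜 ≤ ‖T x‖ * ‖x‖ := re_inner_le_norm _ _
      _ ≤ ‖x‖ ^ 2 := by nlinarith [T.le_opNorm x, norm_nonneg x, norm_nonneg (T x)]
  rw [rayleighQuotient, reApplyInnerSelf_apply, abs_div, abs_sq]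
  refine div_le_one_of_le₀ ?_ (sq_nonneg _)
  rw [sub_apply, one_apply_eq_self, inner_sub_left, map_sub, inner_self_eq_norm_sq, abs_le]
  constructor <;> linarith

theorem IsPositive.exists_isSelfAdjoint_mul_self_eq [CompleteSpace E] {T : E →L[𝕜] E}
    (hT : T.IsPositive) : ∃ S, IsSelfAdjoint S ∧ S * S = T := by
  rcases eq_or_ne T 0 with rfl | hT0
  · exact ⟨0, .zero _, mul_zero 0⟩
  have hc : 0 < ‖T‖ := norm_pos_iff.2 hT0
  set X := ((‖T‖⁻¹ : ℝ) : 𝕜) • T - 1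
  have hXsa : IsSelfAdjoint X :=
    (IsSelfAdjoint.smul (conj_ofReal _) hT.isSelfAdjoint).sub (.one _)
  have hX : ‖X‖ ≤ 1 := by
    refine IsPositive.norm_sub_one_le (hT.smul_of_nonneg ?_) ?_
    · exact_mod_cast (inv_pos.2 hc).le
    · rw [norm_smul, norm_ofReal, abs_of_pos (inv_pos.2 hc), inv_mul_cancel₀ hc.ne']
  refine ⟨((√‖T‖ : ℝ) : 𝕜) • sqrtOneAdd 𝕜 X,
    IsSelfAdjoint.smul (conj_ofReal _) hXsa.sqrtOneAdd, ?_⟩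
  rw [smul_mul_smul_comm, sqrtOneAdd_mul_self hX, ← ofReal_mul, Real.mul_self_sqrt hc.le,
    add_sub_cancel, smul_smul, ← ofReal_mul, mul_inv_cancel₀ hc.ne', ofReal_one, one_smul]

end ContinuousLinearMap

section TraceNorm

variable {𝕜 E : Type*} [RCLike 𝕜] [NormedAddCommGroup E] [InnerProductSpace 𝕜 E]

open scoped InnerProductSpace

theorem summable_norm_sq_iff_tsum_enorm_sq_ne_top {ι F : Type*} [SeminormedAddCommGroup F]
    (f : ι → F) : Summable (fun i ↦ ‖f i‖ ^ 2) ↔ ∑' i, ‖f i‖ₑ ^ 2 ≠ ⊤ := by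
  simp only [enorm_eq_nnnorm, ← ENNReal.coe_pow, ENNReal.tsum_coe_ne_top_iff_summable,
    ← NNReal.summable_coe, NNReal.coe_pow, coe_nnnorm]

theorem tsum_norm_sq_eq_toReal_tsum_enorm_sq {ι F : Type*} [SeminormedAddCommGroup F]
    (f : ι → F) : ∑' i, ‖f i‖ ^ 2 = (∑' i, ‖f i‖ₑ ^ 2).toReal := by
  rw [ENNReal.tsum_toReal_eq fun i ↦ by finiteness]
  simp only [ENNReal.toReal_pow, toReal_enorm]

theorem HilbertBasis.tsum_enorm_inner_sq {ι : Type*} (b : HilbertBasis ι 𝕜 E) (x : E) :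
    ∑' i, ‖⟪b i, x⟫_𝕜‖ₑ ^ 2 = ‖x‖ₑ ^ 2 := by
  have h := lp.hasSum_norm (p := 2) (by norm_num) (b.repr x)
  simp only [b.repr_apply_apply, LinearIsometryEquiv.norm_map, ENNReal.toReal_ofNat,
    Real.rpow_ofNat] at h
  simp only [← ofReal_norm, ← ENNReal.ofReal_pow (norm_nonneg _)]
  rw [← ENNReal.ofReal_tsum_of_nonneg (fun i ↦ by positivity) h.summable, h.tsum_eq]

theorem ContinuousLinearMap.tsum_enorm_sq_apply_eq_tsum_enorm_sq_adjoint_apply [CompleteSpace E]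
    {κ κ' : Type*} (S : E →L[𝕜] E) (M : HilbertBasis κ 𝕜 E) (M' : HilbertBasis κ' 𝕜 E) :
    ∑' i, ‖S (M i)‖ₑ ^ 2 = ∑' j, ‖adjoint S (M' j)‖ₑ ^ 2 :=
  calc ∑' i, ‖S (M i)‖ₑ ^ 2 = ∑' i, ∑' j, ‖⟪M' j, S (M i)⟫_𝕜‖ₑ ^ 2 := by
        simp only [M'.tsum_enorm_inner_sq]
    _ = ∑' j, ∑' i, ‖⟪M i, adjoint S (M' j)⟫_𝕜‖ₑ ^ 2 := by
        rw [ENNReal.tsum_comm]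
        refine tsum_congr fun j ↦ tsum_congr fun i ↦ ?_
        rw [← adjoint_inner_left, ← inner_conj_symm, RCLike.enorm_conj]
    _ = ∑' j, ‖adjoint S (M' j)‖ₑ ^ 2 := by simp only [M.tsum_enorm_inner_sq]

theorem isPositive_clmAbs [CompleteSpace E] (A : E →L[𝕜] E) : (clmAbs A).IsPositive := by
  unfold clmAbs
  split_ifs with h
  · exact h.choose_spec.1
  · exact isPositive_zero

end TraceNorm

/-- If `∑_{u ∈ N} ⟨u, |A| u⟩ < ∞` for some Hilbert basis `N`, then the same holds for every
Hilbert basis `M`, and the value of the sum does not depend on the Hilbert basis. -/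
theorem traceNorm_basis_independent {𝕜 : Type*} [RCLike 𝕜] {E : Type u}
    [NormedAddCommGroup E] [InnerProductSpace 𝕜 E] [CompleteSpace E]
    (A : E →L[𝕜] E) {ι : Type v} (N : HilbertBasis ι 𝕜 E)
    (h : Summable fun i => re (inner 𝕜 (N i) (clmAbs A (N i)) : 𝕜)) :
    (∀ (κ : Type w) (M : HilbertBasis κ 𝕜 E),
      Summable fun i => re (inner 𝕜 (M i) (clmAbs A (M i)) : 𝕜)) ∧
    ∀ (κ : Type w) (κ' : Type w') (M : HilbertBasis κ 𝕜 E) (M' : HilbertBasis κ' 𝕜 E),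
      ∑' i, re (inner 𝕜 (M i) (clmAbs A (M i)) : 𝕜) =
        ∑' i, re (inner 𝕜 (M' i) (clmAbs A (M' i)) : 𝕜) := by
  obtain ⟨S, hS, hSS⟩ := (isPositive_clmAbs A).exists_isSelfAdjoint_mul_self_eq
  have hnorm (u : E) : re (inner 𝕜 u (clmAbs A u) : 𝕜) = ‖S u‖ ^ 2 := by
    rw [apply_norm_sq_eq_inner_adjoint_right, hS.adjoint_eq, ← hSS]
    rfl
  simp only [hnorm, summable_norm_sq_iff_tsum_enorm_sq_ne_top,
    tsum_norm_sq_eq_toReal_tsum_enorm_sq] at h ⊢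
  refine ⟨fun κ M ↦ ?_, fun κ κ' M M' ↦ ?_⟩
  · rwa [S.tsum_enorm_sq_apply_eq_tsum_enorm_sq_adjoint_apply M N, hS.adjoint_eq]
  · rw [S.tsum_enorm_sq_apply_eq_tsum_enorm_sq_adjoint_apply M M', hS.adjoint_eq]
end
end

section
/- Let H be an infinite-dimensional real Hilbert space. Then there exists a bounded operator A on H with A* = −A and A ∘ A = −I. Any such A satisfies ⟨x, A x⟩ = 0 for every x ∈ H (so ∑_{x∈N} |⟨x, A x⟩| = 0 < ∞ for every Hilbert basis N), yet A is not trace class, since |A| = I and ∑_{u∈N} ⟨u, |A| u⟩ = ∑_{u∈N} 1 = +∞ for every Hilbert basis N. In particular, the condition ∑_{x∈N} |⟨x, A x⟩| < ∞ for every Hilbert basis N does not imply trace class in real Hilbert spaces. -/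
noncomputable section
open RCLike ContinuousLinearMap

universe u v w

variable {𝕜 : Type*} [RCLike 𝕜] {E : Type u} [NormedAddCommGroup E] [InnerProductSpace 𝕜 E]
  [CompleteSpace E]

/-!
An infinite Hilbert basis can be reindexed by `ι ⊕ ι`, i.e. split into pairs `(eᵢ, fᵢ)`. The
quarter turn `eᵢ ↦ fᵢ ↦ -eᵢ` is a unitary `J` with `J² = -1`, so `J* = J⁻¹ = -J`. Skew-adjointness
kills every diagonal entry `⟪x, J x⟫`, while `J* J = 1` forces `|J| = 1`, the only positive square
root of `1`; hence `⟪u, |J| u⟫ = 1` for each of the infinitely many basis vectors `u`.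
-/

theorem HilbertBasis.infinite_of_not_finiteDimensional {ι 𝕜 E : Type*} [RCLike 𝕜]
    [NormedAddCommGroup E] [InnerProductSpace 𝕜 E] (hE : ¬ FiniteDimensional 𝕜 E)
    (b : HilbertBasis ι 𝕜 E) : Infinite ι := by
  by_contra hι
  rw [not_infinite_iff_finite] at hι
  have := Fintype.ofFinite ι
  exact hE b.toOrthonormalBasis.toBasis.finiteDimensional_of_finite

namespace HilbertBasis

variable {ι ι' : Type*}

protected def reindex (b : HilbertBasis ι 𝕜 E) (e : ι' ≃ ι) : HilbertBasis ι' 𝕜 E :=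
  HilbertBasis.mk (b.orthonormal.comp e e.injective) (by rw [e.surjective.range_comp, b.dense_span])

theorem exists_sum_self_of_not_finiteDimensional (hE : ¬ FiniteDimensional 𝕜 E) :
    ∃ ι : Type u, Nonempty (HilbertBasis (ι ⊕ ι) 𝕜 E) := by
  obtain ⟨w, b, -⟩ := exists_hilbertBasis 𝕜 E
  have := b.infinite_of_not_finiteDimensional hE
  obtain ⟨e⟩ : Nonempty ((w ⊕ w) ≃ w) := by
    rw [← Cardinal.eq, Cardinal.mk_sum, Cardinal.lift_id]
    exact Cardinal.add_eq_self (Cardinal.infinite_iff.mp this)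
  exact ⟨w, ⟨b.reindex e⟩⟩

/-- A quarter turn in each plane spanned by `c (inl i)` and `c (inr i)`. -/
def quarterTurn (c : HilbertBasis (ι ⊕ ι) 𝕜 E) : HilbertBasis (ι ⊕ ι) 𝕜 E :=
  HilbertBasis.mk (v := Sum.elim (fun i => c (.inr i)) (fun i => -c (.inl i)))
    (by
      classical
      rw [orthonormal_iff_ite]
      rintro (i | i) (j | j) <;>
        simp [orthonormal_iff_ite.mp c.orthonormal, inner_neg_left, inner_neg_right])
    (by
      refine c.dense_span.ge.trans (Submodule.topologicalClosure_mono (Submodule.span_le.mpr ?_))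
      rintro _ ⟨i | i, rfl⟩
      · exact neg_mem_iff.mp (Submodule.subset_span ⟨.inr i, by simp⟩)
      · exact Submodule.subset_span ⟨.inl i, rfl⟩)

@[simp]
theorem coe_quarterTurn (c : HilbertBasis (ι ⊕ ι) 𝕜 E) :
    ⇑c.quarterTurn = Sum.elim (fun i => c (.inr i)) (fun i => -c (.inl i)) :=
  HilbertBasis.coe_mk _ _

def quarterTurnEquiv (c : HilbertBasis (ι ⊕ ι) 𝕜 E) : E ≃ₗᵢ[𝕜] E :=
  c.repr.trans c.quarterTurn.repr.symm

theorem quarterTurnEquiv_apply_basis (c : HilbertBasis (ι ⊕ ι) 𝕜 E) (k : ι ⊕ ι) :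
    c.quarterTurnEquiv (c k) = c.quarterTurn k := by
  classical
  simp [quarterTurnEquiv, c.repr_self, HilbertBasis.repr_symm_single]

theorem quarterTurnEquiv_mul_self (c : HilbertBasis (ι ⊕ ι) 𝕜 E) :
    (c.quarterTurnEquiv : E →L[𝕜] E) * c.quarterTurnEquiv = -1 := by
  refine ContinuousLinearMap.ext_on
    (Submodule.dense_iff_topologicalClosure_eq_top.mpr c.dense_span) ?_
  rintro _ ⟨i | i, rfl⟩ <;> simp [quarterTurnEquiv_apply_basis]

end HilbertBasis

theorem LinearIsometryEquiv.adjoint_eq_neg_of_mul_self_eq_neg_one (J : E ≃ₗᵢ[𝕜] E)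
    (hJ : (J : E →L[𝕜] E) * J = -1) : adjoint (J : E →L[𝕜] E) = -J := by
  rw [J.adjoint_eq_symm]
  ext x
  apply J.injective
  have hJx : J (J x) = -x := by simpa using congr($hJ x)
  simp [hJx]

theorem exists_adjoint_eq_neg_and_mul_self_eq_neg_one (hE : ¬ FiniteDimensional 𝕜 E) :
    ∃ A : E →L[𝕜] E, adjoint A = -A ∧ A * A = -1 := by
  obtain ⟨ι, ⟨c⟩⟩ := HilbertBasis.exists_sum_self_of_not_finiteDimensional hE
  have hJ := c.quarterTurnEquiv_mul_self
  exact ⟨_, c.quarterTurnEquiv.adjoint_eq_neg_of_mul_self_eq_neg_one hJ, hJ⟩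

theorem ContinuousLinearMap.re_inner_apply_self_eq_zero {A : E →L[𝕜] E} (hA : adjoint A = -A)
    (x : E) : re (inner 𝕜 x (A x)) = 0 := by
  have h := A.adjoint_inner_right x x
  rw [hA, neg_apply, inner_neg_right] at h
  have := congr_arg re h
  rw [map_neg, inner_re_symm (A x)] at this
  linarith

theorem ContinuousLinearMap.IsPositive.eq_one_of_mul_self_eq_one {F : Type*}
    [NormedAddCommGroup F] [InnerProductSpace 𝕜 F] {S : F →L[𝕜] F} (hS : S.IsPositive)
    (hSS : S * S = 1) : S = 1 := by
  ext x
  set y := x - S x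
  have hSSx : S (S x) = x := by simpa using congr($hSS x)
  have hSy : S y = -y := by rw [map_sub, hSSx, neg_sub]
  have hy := hS.re_inner_nonneg_left y
  rw [hSy, inner_neg_left, map_neg, inner_self_eq_norm_sq, neg_nonneg] at hy
  have : y = 0 := norm_eq_zero.mp (by nlinarith [norm_nonneg y])
  exact (sub_eq_zero.mp this).symm

theorem clmAbs_eq_one_of_star_mul_self_eq_one {A : E →L[𝕜] E} (hA : star A * A = 1) :
    clmAbs A = 1 := by
  have hex : ∃ S : E →L[𝕜] E, S.IsPositive ∧ S * S = star A * A :=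
    ⟨1, isPositive_one, by rw [hA, one_mul]⟩
  rw [clmAbs, dif_pos hex]
  exact hex.choose_spec.1.eq_one_of_mul_self_eq_one (hex.choose_spec.2.trans hA)

/-- In an infinite-dimensional real Hilbert space there exists a bounded operator `A` with
`A* = -A` and `A ∘ A = -I`. Any such `A` satisfies `⟨x, A x⟩ = 0` for every `x` (so
`∑_{x ∈ N} |⟨x, A x⟩| = 0` for every Hilbert basis `N`), yet `A` is not trace class:
`|A| = I` and `∑_{u ∈ N} ⟨u, |A| u⟩` diverges for every Hilbert basis. In particular,
absolute summability of the diagonal does not imply trace class over the reals. -/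
theorem real_counterexample_traceClass {E : Type u} [NormedAddCommGroup E]
    [InnerProductSpace ℝ E] [CompleteSpace E] (hinf : ¬ FiniteDimensional ℝ E) :
    (∃ A : E →L[ℝ] E, ContinuousLinearMap.adjoint A = -A ∧ A * A = -1) ∧
    ∀ A : E →L[ℝ] E, ContinuousLinearMap.adjoint A = -A → A * A = -1 →
      (∀ x : E, (inner ℝ x (A x) : ℝ) = 0) ∧
      (∀ (ι : Type u) (N : HilbertBasis ι ℝ E),
        ∑' i, |(inner ℝ (N i) (A (N i)) : ℝ)| = 0) ∧
      clmAbs A = 1 ∧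
      (∀ (ι : Type u) (N : HilbertBasis ι ℝ E),
        ¬ Summable fun i => re (inner ℝ (N i) (clmAbs A (N i)) : ℝ)) ∧
      ¬ IsTraceClass A := by
  refine ⟨exists_adjoint_eq_neg_and_mul_self_eq_neg_one hinf, fun A hadj hA2 => ?_⟩
  have hdiag (x : E) : inner ℝ x (A x) = 0 := A.re_inner_apply_self_eq_zero hadj x
  have habs : clmAbs A = 1 :=
    clmAbs_eq_one_of_star_mul_self_eq_one (by rw [star_eq_adjoint, hadj, neg_mul, hA2, neg_neg])
  have hdiv (ι : Type u) (N : HilbertBasis ι ℝ E) :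
      ¬ Summable fun i => re (inner ℝ (N i) (clmAbs A (N i)) : ℝ) := by
    have := N.infinite_of_not_finiteDimensional hinf
    simpa [habs, N.orthonormal.1] using (summable_const_iff (1 : ℝ)).not.mpr one_ne_zero
  exact ⟨hdiag, fun ι N => by simp [hdiag], habs, hdiv, fun ⟨ι, N, h⟩ => hdiv ι N h⟩
end
end
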